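/- Multiple robustness (case g, q, h, r correct): if g₁ = g, q₁ = q, h₁ = h, r₁ = r (so c₁ = c), with b₁, u₁, v₁ arbitrary bounded functions, then E[D_{η₁}(O)] = θ, where D_{η₁}(o) = 1{a=a'}/g(a'|w) c(a',z,m,w)(y − b₁(a',z,m,w)) + 1{a=a'}/g(a'|w)(u₁(z,a',w) − Σ_z u₁(z,a',w) q(z|a',w)) + 1{a=a*}/g(a*|w)(Σ_z b₁(a',z,m,w) q(z|a',w) − v₁(a*,w)) + v₁(a*,w). -/
import Mathlib


open Finset
open scoped Classical

/-- Probability of the event `S` under the pmf `P` on a finite outcome space. -/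
noncomputable def pr {Ω : Type*} [Fintype Ω] (P : Ω → ℝ) (S : Ω → Prop) : ℝ :=
  ∑ ω, if S ω then P ω else 0

/-- Conditional probability `P(S | T)`. -/
noncomputable def cpr {Ω : Type*} [Fintype Ω] (P : Ω → ℝ) (S T : Ω → Prop) : ℝ :=
  pr P (fun ω => S ω ∧ T ω) / pr P T

/-- Conditional expectation `E[f | T]` (pmf-weighted average). -/
noncomputable def cex {Ω : Type*} [Fintype Ω] (P : Ω → ℝ) (f : Ω → ℝ)
    (T : Ω → Prop) : ℝ :=
  (∑ ω, if T ω then P ω * f ω else 0) / pr P T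

section EIF

variable {Ω 𝒲 𝒜 𝒵 ℳ : Type*} [Fintype Ω] [Fintype 𝒲] [Fintype 𝒵] [Fintype ℳ]
variable (P : Ω → ℝ) (W : Ω → 𝒲) (A : Ω → 𝒜) (Z : Ω → 𝒵) (M : Ω → ℳ) (Y : Ω → ℝ)

/-- True `g(a|w) = P(A=a|W=w)`. -/
noncomputable def gg (a : 𝒜) (w : 𝒲) : ℝ :=
  cpr P (fun ω => A ω = a) (fun ω => W ω = w)

/-- True `q(z|a,w) = P(Z=z|A=a,W=w)`. -/
noncomputable def qq (z : 𝒵) (a : 𝒜) (w : 𝒲) : ℝ :=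
  cpr P (fun ω => Z ω = z) (fun ω => A ω = a ∧ W ω = w)

/-- True outcome regression `b(a,z,m,w) = E[Y|A=a,Z=z,M=m,W=w]`. -/
noncomputable def bb (a : 𝒜) (z : 𝒵) (m : ℳ) (w : 𝒲) : ℝ :=
  cex P Y (fun ω => A ω = a ∧ Z ω = z ∧ M ω = m ∧ W ω = w)

/-- True density ratio `c(a,z,m,w) = p(m|a*,w)/p(m|a,z,w)`. -/
noncomputable def cc (astar a : 𝒜) (z : 𝒵) (m : ℳ) (w : 𝒲) : ℝ :=
  cpr P (fun ω => M ω = m) (fun ω => A ω = astar ∧ W ω = w) /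
    cpr P (fun ω => M ω = m) (fun ω => A ω = a ∧ Z ω = z ∧ W ω = w)

/-- True `p(m|a,w)`. -/
noncomputable def pM (m : ℳ) (a : 𝒜) (w : 𝒲) : ℝ :=
  cpr P (fun ω => M ω = m) (fun ω => A ω = a ∧ W ω = w)

/-- The target parameter `θ` (with the true outcome regression `b`). -/
noncomputable def θparam (a' astar : 𝒜) : ℝ :=
  ∑ w, ∑ z, ∑ m, bb P W A Z M Y a' z m w * qq P W A Z z a' w *
    pM P W A M m astar w * pr P (fun ω => W ω = w)

/-- The uncentered EIF `D_{η₁}` with true `g, q, h, r` (hence true `c`) and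
arbitrary `b₁, u₁, v₁`. -/
noncomputable def DOne (b₁ : 𝒜 → 𝒵 → ℳ → 𝒲 → ℝ) (u₁ : 𝒵 → 𝒜 → 𝒲 → ℝ)
    (v₁ : 𝒜 → 𝒲 → ℝ) (a' astar : 𝒜) (ω : Ω) : ℝ :=
  (if A ω = a' then (1 : ℝ) else 0) / gg P W A a' (W ω) *
      cc P W A Z M astar a' (Z ω) (M ω) (W ω) *
      (Y ω - b₁ a' (Z ω) (M ω) (W ω)) +
    (if A ω = a' then (1 : ℝ) else 0) / gg P W A a' (W ω) *
      (u₁ (Z ω) a' (W ω) - ∑ z, u₁ z a' (W ω) * qq P W A Z z a' (W ω)) +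
    (if A ω = astar then (1 : ℝ) else 0) / gg P W A astar (W ω) *
      ((∑ z, b₁ a' z (M ω) (W ω) * qq P W A Z z a' (W ω)) - v₁ astar (W ω)) +
    v₁ astar (W ω)

/-! ### Auxiliary lemmas -/

lemma pr_congr' {S T : Ω → Prop} (h : ∀ ω, S ω ↔ T ω) : pr P S = pr P T :=
  Finset.sum_congr rfl fun ω _ => by simp [h ω]

lemma pr_mono' (hP : ∀ ω, 0 ≤ P ω) {S T : Ω → Prop} (h : ∀ ω, S ω → T ω) :
    pr P S ≤ pr P T := by
  refine Finset.sum_le_sum fun ω _ => ?_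
  by_cases hs : S ω
  · simp [hs, h ω hs]
  · by_cases ht : T ω <;> simp [hs, ht, hP ω]

lemma sum_fiber' {ι : Type*} [Fintype ι] (κ : Ω → ι) (g : Ω → ℝ) :
    ∑ ω, g ω = ∑ i, ∑ ω, if κ ω = i then g ω else 0 := by
  rw [Finset.sum_comm]
  exact Finset.sum_congr rfl fun ω _ => by simp

lemma pr_fiber' {ι : Type*} [Fintype ι] (κ : Ω → ι) (E : Ω → Prop) :
    ∑ i, pr P (fun ω => κ ω = i ∧ E ω) = pr P E := by
  unfold pr
  rw [Finset.sum_comm]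
  refine Finset.sum_congr rfl fun ω _ => ?_
  by_cases hE : E ω <;> simp [hE]

lemma sum_ite_mul' (E : Ω → Prop) (c : ℝ) :
    ∑ ω, (if E ω then P ω * c else 0) = pr P E * c := by
  rw [pr, Finset.sum_mul]
  exact Finset.sum_congr rfl fun ω _ => by by_cases h : E ω <;> simp [h]

lemma qq_mul' (z : 𝒵) (a : 𝒜) (w : 𝒲)
    (h : pr P (fun ω => A ω = a ∧ W ω = w) ≠ 0) :
    qq P W A Z z a w * pr P (fun ω => A ω = a ∧ W ω = w) =
      pr P (fun ω => Z ω = z ∧ A ω = a ∧ W ω = w) := by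
  rw [qq, cpr, div_mul_cancel₀ _ h]

lemma pM_mul' (m : ℳ) (a : 𝒜) (w : 𝒲)
    (h : pr P (fun ω => A ω = a ∧ W ω = w) ≠ 0) :
    pM P W A M m a w * pr P (fun ω => A ω = a ∧ W ω = w) =
      pr P (fun ω => M ω = m ∧ A ω = a ∧ W ω = w) := by
  rw [pM, cpr, div_mul_cancel₀ _ h]

lemma gg_mul' (a : 𝒜) (w : 𝒲) (h : pr P (fun ω => W ω = w) ≠ 0) :
    gg P W A a w * pr P (fun ω => W ω = w) =
      pr P (fun ω => A ω = a ∧ W ω = w) := by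
  rw [gg, cpr, div_mul_cancel₀ _ h]

lemma qq_sum_one' (a : 𝒜) (w : 𝒲)
    (h : pr P (fun ω => A ω = a ∧ W ω = w) ≠ 0) :
    ∑ z, qq P W A Z z a w = 1 := by
  simp only [qq, cpr]
  rw [← Finset.sum_div, pr_fiber' P Z (fun ω => A ω = a ∧ W ω = w), div_self h]

lemma pM_sum_one' (a : 𝒜) (w : 𝒲)
    (h : pr P (fun ω => A ω = a ∧ W ω = w) ≠ 0) :
    ∑ m, pM P W A M m a w = 1 := by
  simp only [pM, cpr]
  rw [← Finset.sum_div, pr_fiber' P M (fun ω => A ω = a ∧ W ω = w), div_self h]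

/-- Coefficient identity: `P(A=a',Z=z,M=m,W=w) · c(a*,a',z,m,w) / g(a'|w)
    = q(z|a',w) · p(m|a*,w) · P(W=w)`. -/
lemma coeff_eq' (a' astar : 𝒜) (z : 𝒵) (m : ℳ) (w : 𝒲)
    (hW : pr P (fun ω => W ω = w) ≠ 0)
    (hAW : pr P (fun ω => A ω = a' ∧ W ω = w) ≠ 0)
    (hAWs : pr P (fun ω => A ω = astar ∧ W ω = w) ≠ 0)
    (hAZW : pr P (fun ω => A ω = a' ∧ Z ω = z ∧ W ω = w) ≠ 0)
    (hMAZW : pr P (fun ω => M ω = m ∧ A ω = a' ∧ Z ω = z ∧ W ω = w) ≠ 0) :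
    pr P (fun ω => A ω = a' ∧ Z ω = z ∧ M ω = m ∧ W ω = w) *
        cc P W A Z M astar a' z m w / gg P W A a' w =
      qq P W A Z z a' w * pM P W A M m astar w * pr P (fun ω => W ω = w) := by
  have h1 : pr P (fun ω => A ω = a' ∧ Z ω = z ∧ M ω = m ∧ W ω = w) =
      pr P (fun ω => M ω = m ∧ A ω = a' ∧ Z ω = z ∧ W ω = w) :=
    pr_congr' P fun ω => by tauto
  have h2 : pr P (fun ω => A ω = a' ∧ Z ω = z ∧ W ω = w) =
      pr P (fun ω => Z ω = z ∧ A ω = a' ∧ W ω = w) :=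
    pr_congr' P fun ω => by tauto
  simp only [cc, gg, qq, pM, cpr]
  rw [h1, h2]
  field_simp

set_option maxHeartbeats 1000000 in
/-- Term 1. -/
lemma term1_eq' (b₁ : 𝒜 → 𝒵 → ℳ → 𝒲 → ℝ) (a' astar : 𝒜)
    (hW : ∀ w, pr P (fun ω => W ω = w) ≠ 0)
    (hAW : ∀ a w, pr P (fun ω => A ω = a ∧ W ω = w) ≠ 0)
    (hAZW : ∀ z w, pr P (fun ω => A ω = a' ∧ Z ω = z ∧ W ω = w) ≠ 0)
    (hMAZW : ∀ z m w, pr P (fun ω => M ω = m ∧ A ω = a' ∧ Z ω = z ∧ W ω = w) ≠ 0)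
    (hB : ∀ z m w, pr P (fun ω => A ω = a' ∧ Z ω = z ∧ M ω = m ∧ W ω = w) ≠ 0) :
    ∑ ω, P ω * ((if A ω = a' then (1 : ℝ) else 0) / gg P W A a' (W ω) *
        cc P W A Z M astar a' (Z ω) (M ω) (W ω) *
        (Y ω - b₁ a' (Z ω) (M ω) (W ω))) =
      ∑ w, ∑ z, ∑ m, (bb P W A Z M Y a' z m w - b₁ a' z m w) *
        qq P W A Z z a' w * pM P W A M m astar w * pr P (fun ω => W ω = w) := by
  rw [sum_fiber' (fun ω => (W ω, Z ω, M ω))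
    (fun ω => P ω * ((if A ω = a' then (1 : ℝ) else 0) / gg P W A a' (W ω) *
      cc P W A Z M astar a' (Z ω) (M ω) (W ω) * (Y ω - b₁ a' (Z ω) (M ω) (W ω))))]
  rw [Fintype.sum_prod_type]
  refine Finset.sum_congr rfl fun w _ => ?_
  rw [Fintype.sum_prod_type]
  refine Finset.sum_congr rfl fun z _ => ?_
  refine Finset.sum_congr rfl fun m _ => ?_
  have key : ∀ ω, (@ite ℝ ((W ω, Z ω, M ω) = (w, z, m)) (Classical.propDecidable _)
        (P ω * ((if A ω = a' then (1 : ℝ) else 0) / gg P W A a' (W ω) *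
          cc P W A Z M astar a' (Z ω) (M ω) (W ω) * (Y ω - b₁ a' (Z ω) (M ω) (W ω))))
      0) =
      (@ite ℝ (A ω = a' ∧ Z ω = z ∧ M ω = m ∧ W ω = w) (Classical.propDecidable _)
          (P ω * Y ω) 0) *
          (cc P W A Z M astar a' z m w / gg P W A a' w) -
        (@ite ℝ (A ω = a' ∧ Z ω = z ∧ M ω = m ∧ W ω = w) (Classical.propDecidable _)
          (P ω * b₁ a' z m w) 0) *
          (cc P W A Z M astar a' z m w / gg P W A a' w) := by
    intro ω
    by_cases hWω : W ω = w <;> by_cases hZω : Z ω = z <;> by_cases hMω : M ω = m <;>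
      by_cases hAω : A ω = a' <;>
      simp [Prod.ext_iff, hWω, hZω, hMω, hAω] <;> (first | ring1 | tauto | (refine Or.inl ?_; ring1) | (refine Or.inr ?_; ring1))
  refine (Finset.sum_congr rfl fun ω _ => key ω).trans ?_
  rw [Finset.sum_sub_distrib, ← Finset.sum_mul, ← Finset.sum_mul]
  have hbY : ∑ ω, (@ite ℝ (A ω = a' ∧ Z ω = z ∧ M ω = m ∧ W ω = w)
      (Classical.propDecidable _) (P ω * Y ω) 0) =
      bb P W A Z M Y a' z m w *
        pr P (fun ω => A ω = a' ∧ Z ω = z ∧ M ω = m ∧ W ω = w) := by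
    rw [bb, cex, div_mul_cancel₀ _ (hB z m w)]
  rw [hbY, sum_ite_mul' P (fun ω => A ω = a' ∧ Z ω = z ∧ M ω = m ∧ W ω = w) (b₁ a' z m w)]
  have hco := coeff_eq' P W A Z M a' astar z m w (hW w) (hAW a' w) (hAW astar w)
    (hAZW z w) (hMAZW z m w)
  linear_combination (bb P W A Z M Y a' z m w - b₁ a' z m w) * hco

set_option maxHeartbeats 1000000 in
/-- Term 2 vanishes. -/
lemma term2_eq' (u₁ : 𝒵 → 𝒜 → 𝒲 → ℝ) (a' : 𝒜)
    (hAW : ∀ w, pr P (fun ω => A ω = a' ∧ W ω = w) ≠ 0) :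
    ∑ ω, P ω * ((if A ω = a' then (1 : ℝ) else 0) / gg P W A a' (W ω) *
        (u₁ (Z ω) a' (W ω) - ∑ z, u₁ z a' (W ω) * qq P W A Z z a' (W ω))) = 0 := by
  rw [sum_fiber' (fun ω => (W ω, Z ω))
    (fun ω => P ω * ((if A ω = a' then (1 : ℝ) else 0) / gg P W A a' (W ω) *
      (u₁ (Z ω) a' (W ω) - ∑ z, u₁ z a' (W ω) * qq P W A Z z a' (W ω))))]
  rw [Fintype.sum_prod_type]
  refine Finset.sum_eq_zero fun w _ => ?_
  have key : ∀ ζ : 𝒵, (∑ ω, @ite ℝ ((W ω, Z ω) = (w, ζ)) (Classical.propDecidable _)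
        (P ω * ((if A ω = a' then (1 : ℝ) else 0) / gg P W A a' (W ω) *
          (u₁ (Z ω) a' (W ω) - ∑ z, u₁ z a' (W ω) * qq P W A Z z a' (W ω))))
      0) =
      (pr P (fun ω => A ω = a' ∧ W ω = w) / gg P W A a' w) *
          (u₁ ζ a' w * qq P W A Z ζ a' w) -
        (pr P (fun ω => A ω = a' ∧ W ω = w) / gg P W A a' w) *
          ((∑ z, u₁ z a' w * qq P W A Z z a' w) * qq P W A Z ζ a' w) := by
    intro ζ
    have step : (∑ ω, @ite ℝ ((W ω, Z ω) = (w, ζ)) (Classical.propDecidable _)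
        (P ω * ((if A ω = a' then (1 : ℝ) else 0) / gg P W A a' (W ω) *
          (u₁ (Z ω) a' (W ω) - ∑ z, u₁ z a' (W ω) * qq P W A Z z a' (W ω))))
      0) =
        pr P (fun ω => Z ω = ζ ∧ A ω = a' ∧ W ω = w) *
          ((u₁ ζ a' w - ∑ z, u₁ z a' w * qq P W A Z z a' w) / gg P W A a' w) := by
      rw [← sum_ite_mul']
      refine Finset.sum_congr rfl fun ω _ => ?_
      by_cases hWω : W ω = w <;> by_cases hZω : Z ω = ζ <;> by_cases hAω : A ω = a' <;>
        simp [Prod.ext_iff, hWω, hZω, hAω] <;> (first | ring1 | tauto | (refine Or.inl ?_; ring1) | (refine Or.inr ?_; ring1))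
    rw [step, ← qq_mul' P W A Z ζ a' w (hAW w)]
    ring
  refine (Finset.sum_congr rfl fun ζ _ => key ζ).trans ?_
  rw [Finset.sum_sub_distrib, ← Finset.mul_sum, ← Finset.mul_sum, ← Finset.mul_sum,
    qq_sum_one' P W A Z a' w (hAW w), mul_one, sub_self]

set_option maxHeartbeats 1000000 in
/-- Term 3. -/
lemma term3_eq' (b₁ : 𝒜 → 𝒵 → ℳ → 𝒲 → ℝ) (v₁ : 𝒜 → 𝒲 → ℝ) (a' astar : 𝒜)
    (hW : ∀ w, pr P (fun ω => W ω = w) ≠ 0)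
    (hAW : ∀ w, pr P (fun ω => A ω = astar ∧ W ω = w) ≠ 0) :
    ∑ ω, P ω * ((if A ω = astar then (1 : ℝ) else 0) / gg P W A astar (W ω) *
        ((∑ z, b₁ a' z (M ω) (W ω) * qq P W A Z z a' (W ω)) - v₁ astar (W ω))) =
      (∑ w, ∑ z, ∑ m, b₁ a' z m w * qq P W A Z z a' w * pM P W A M m astar w *
        pr P (fun ω => W ω = w)) -
      ∑ w, v₁ astar w * pr P (fun ω => W ω = w) := by
  rw [sum_fiber' (fun ω => (W ω, M ω))
    (fun ω => P ω * ((if A ω = astar then (1 : ℝ) else 0) / gg P W A astar (W ω) *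
      ((∑ z, b₁ a' z (M ω) (W ω) * qq P W A Z z a' (W ω)) - v₁ astar (W ω))))]
  rw [Fintype.sum_prod_type, ← Finset.sum_sub_distrib]
  refine Finset.sum_congr rfl fun w _ => ?_
  have hg : gg P W A astar w ≠ 0 := by
    intro h0
    apply hAW w
    rw [← gg_mul' P W A astar w (hW w), h0, zero_mul]
  have key : ∀ m : ℳ, (∑ ω, @ite ℝ ((W ω, M ω) = (w, m)) (Classical.propDecidable _)
        (P ω * ((if A ω = astar then (1 : ℝ) else 0) / gg P W A astar (W ω) *
          ((∑ z, b₁ a' z (M ω) (W ω) * qq P W A Z z a' (W ω)) - v₁ astar (W ω))))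
      0) =
      (∑ z, b₁ a' z m w * qq P W A Z z a' w * pM P W A M m astar w *
        pr P (fun ω => W ω = w)) -
      (v₁ astar w * pr P (fun ω => W ω = w)) * pM P W A M m astar w := by
    intro m
    have step : (∑ ω, @ite ℝ ((W ω, M ω) = (w, m)) (Classical.propDecidable _)
        (P ω * ((if A ω = astar then (1 : ℝ) else 0) / gg P W A astar (W ω) *
          ((∑ z, b₁ a' z (M ω) (W ω) * qq P W A Z z a' (W ω)) - v₁ astar (W ω))))
      0) =
        pr P (fun ω => M ω = m ∧ A ω = astar ∧ W ω = w) *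
          (((∑ z, b₁ a' z m w * qq P W A Z z a' w) - v₁ astar w) / gg P W A astar w) := by
      rw [← sum_ite_mul']
      refine Finset.sum_congr rfl fun ω _ => ?_
      by_cases hWω : W ω = w <;> by_cases hMω : M ω = m <;> by_cases hAω : A ω = astar <;>
        simp [Prod.ext_iff, hWω, hMω, hAω] <;> (first | ring1 | tauto | (refine Or.inl ?_; ring1) | (refine Or.inr ?_; ring1))
    have step2 : pr P (fun ω => M ω = m ∧ A ω = astar ∧ W ω = w) *
          (((∑ z, b₁ a' z m w * qq P W A Z z a' w) - v₁ astar w) / gg P W A astar w) =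
        pM P W A M m astar w * pr P (fun ω => W ω = w) *
          ((∑ z, b₁ a' z m w * qq P W A Z z a' w) - v₁ astar w) := by
      rw [← pM_mul' P W A M m astar w (hAW w), ← gg_mul' P W A astar w (hW w)]
      field_simp
    rw [step, step2, mul_sub, Finset.mul_sum]
    congr 1
    · exact Finset.sum_congr rfl fun z _ => by ring
    · ring
  refine (Finset.sum_congr rfl fun m _ => key m).trans ?_
  rw [Finset.sum_sub_distrib, ← Finset.mul_sum, pM_sum_one' P W A M astar w (hAW w),
    mul_one, Finset.sum_comm]

/-- Term 4. -/
lemma term4_eq' (v₁ : 𝒜 → 𝒲 → ℝ) (astar : 𝒜) :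
    ∑ ω, P ω * v₁ astar (W ω) = ∑ w, v₁ astar w * pr P (fun ω => W ω = w) := by
  rw [sum_fiber' W (fun ω => P ω * v₁ astar (W ω))]
  refine Finset.sum_congr rfl fun w _ => ?_
  have key : ∀ ω, (if W ω = w then P ω * v₁ astar (W ω) else 0) =
      (if W ω = w then P ω * v₁ astar w else 0) := by
    intro ω; by_cases h : W ω = w <;> simp [h]
  refine (Finset.sum_congr rfl fun ω _ => key ω).trans ?_
  rw [sum_ite_mul' P (fun ω => W ω = w) (v₁ astar w), mul_comm]

set_option maxHeartbeats 1000000 in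
/-- Multiple robustness (case `g, q, h, r` correct): with `c₁ = c` the
true density ratio and `b₁, u₁, v₁` arbitrary, `E[D_{η₁}(O)] = θ`. -/
theorem multiple_robustness_gqhr (hP : ∀ ω, 0 ≤ P ω) (hsum : ∑ ω, P ω = 1)
    (hpos : ∀ w a z m,
      0 < pr P (fun ω => W ω = w ∧ A ω = a ∧ Z ω = z ∧ M ω = m))
    (b₁ : 𝒜 → 𝒵 → ℳ → 𝒲 → ℝ) (u₁ : 𝒵 → 𝒜 → 𝒲 → ℝ) (v₁ : 𝒜 → 𝒲 → ℝ)
    (a' astar : 𝒜) :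
    ∑ ω, P ω * DOne P W A Z M Y b₁ u₁ v₁ a' astar ω =
      θparam P W A Z M Y a' astar := by
  have hΩ : Nonempty Ω := by
    by_contra h
    rw [not_nonempty_iff] at h
    rw [Finset.univ_eq_empty, Finset.sum_empty] at hsum
    exact one_ne_zero hsum.symm
  obtain ⟨ω₀⟩ := hΩ
  have hW : ∀ w, pr P (fun ω => W ω = w) ≠ 0 := fun w =>
    ne_of_gt (lt_of_lt_of_le (hpos w a' (Z ω₀) (M ω₀))
      (pr_mono' P hP fun ω h => h.1))
  have hAW : ∀ a w, pr P (fun ω => A ω = a ∧ W ω = w) ≠ 0 := fun a w =>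
    ne_of_gt (lt_of_lt_of_le (hpos w a (Z ω₀) (M ω₀))
      (pr_mono' P hP fun ω h => ⟨h.2.1, h.1⟩))
  have hAZW : ∀ z w, pr P (fun ω => A ω = a' ∧ Z ω = z ∧ W ω = w) ≠ 0 := fun z w =>
    ne_of_gt (lt_of_lt_of_le (hpos w a' z (M ω₀))
      (pr_mono' P hP fun ω h => ⟨h.2.1, h.2.2.1, h.1⟩))
  have hMAZW : ∀ z m w,
      pr P (fun ω => M ω = m ∧ A ω = a' ∧ Z ω = z ∧ W ω = w) ≠ 0 := fun z m w =>
    ne_of_gt (lt_of_lt_of_le (hpos w a' z m)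
      (pr_mono' P hP fun ω h => ⟨h.2.2.2, h.2.1, h.2.2.1, h.1⟩))
  have hB : ∀ z m w,
      pr P (fun ω => A ω = a' ∧ Z ω = z ∧ M ω = m ∧ W ω = w) ≠ 0 := fun z m w =>
    ne_of_gt (lt_of_lt_of_le (hpos w a' z m)
      (pr_mono' P hP fun ω h => ⟨h.2.1, h.2.2.1, h.2.2.2, h.1⟩))
  simp only [DOne, mul_add]
  rw [Finset.sum_add_distrib, Finset.sum_add_distrib, Finset.sum_add_distrib]
  rw [term1_eq' P W A Z M Y b₁ a' astar hW hAW hAZW hMAZW hB,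
    term2_eq' P W A Z u₁ a' (hAW a'),
    term3_eq' P W A Z M b₁ v₁ a' astar hW (hAW astar),
    term4_eq' P W v₁ astar]
  have hsplit : (∑ w, ∑ z, ∑ m, (bb P W A Z M Y a' z m w - b₁ a' z m w) *
      qq P W A Z z a' w * pM P W A M m astar w * pr P (fun ω => W ω = w)) =
      θparam P W A Z M Y a' astar -
      ∑ w, ∑ z, ∑ m, b₁ a' z m w * qq P W A Z z a' w * pM P W A M m astar w *
        pr P (fun ω => W ω = w) := by
    rw [θparam, ← Finset.sum_sub_distrib]
    refine Finset.sum_congr rfl fun w _ => ?_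
    rw [← Finset.sum_sub_distrib]
    refine Finset.sum_congr rfl fun z _ => ?_
    rw [← Finset.sum_sub_distrib]
    exact Finset.sum_congr rfl fun m _ => by ring
  rw [hsplit]
  ring

end EIF
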